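/- For n ≥ 4 and a ≠ 0, define Yk recursively by Y_{k+1} = ⁅Y1, Y_k⁆ for k ≥ 2. Then ⁅Y_i, Y_j⁆ = 0 for all i, j ≥ 2; that is, all the iterated brackets ad(Y1)^k(Y2), k ≥ 0, commute pairwise, so the span of {Y1, Y2, Y3, …} is a nilpotent Lie subalgebra of gl(n+1, ℂ) with one-codimensional abelian ideal (the model filiform structure L_n). -/

import Mathlib

open Matrix
open Fin.NatCast

noncomputable section

/-- The (n+1)×(n+1) matrix unit `E i j` (with 0-based indices). -/
def E (n : ℕ) (i j : Fin (n+1)) : Matrix (Fin (n+1)) (Fin (n+1)) ℂ :=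
  Matrix.single i j 1

/-- Y1 = a·(E₁₁+E₁₂+E₂₁+E₂₂) + E_{1,n+1} + Σ_{k=4}^{n} ((k−3)/(k−2))·E_{k,k−1}
    + α·E_{n,1} + β·E_{n,2}  (1-based indexing). -/
def Y1 (n : ℕ) (a α β : ℂ) : Matrix (Fin (n+1)) (Fin (n+1)) ℂ :=
  a • (E n 0 0 + E n 0 1 + E n 1 0 + E n 1 1) + E n 0 (Fin.last n)
    + ∑ k ∈ Finset.Icc 4 n, (((k : ℂ) - 3) / ((k : ℂ) - 2)) • E n (↑(k-1)) (↑(k-2))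
    + α • E n (↑(n-1)) 0 + β • E n (↑(n-1)) 1

/-- Y2 = a·(E₁₁+E₁₂+E₂₁+E₂₂) + E_{2,n+1} − E_{3,1} + E_{3,2}
    + Σ_{k=4}^{n} (1/(k−2))·E_{k,k−1} + β·E_{n,1} + α·E_{n,2}  (1-based indexing). -/
def Y2 (n : ℕ) (a α β : ℂ) : Matrix (Fin (n+1)) (Fin (n+1)) ℂ :=
  a • (E n 0 0 + E n 0 1 + E n 1 0 + E n 1 1) + E n 1 (Fin.last n)
    - E n 2 0 + E n 2 1
    + ∑ k ∈ Finset.Icc 4 n, (1 / ((k : ℂ) - 2)) • E n (↑(k-1)) (↑(k-2))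
    + β • E n (↑(n-1)) 0 + α • E n (↑(n-1)) 1
/-- `Yad n a α β k = ad(Y1)^k (Y2)`, i.e. Y_{k+2} in the paper's notation. -/
def Yad (n : ℕ) (a α β : ℂ) : ℕ → Matrix (Fin (n+1)) (Fin (n+1)) ℂ
  | 0 => Y2 n a α β
  | k + 1 => ⁅Y1 n a α β, Yad n a α β k⁆

/-!
Read every matrix through its columns, writing `e_0, …, e_n` for the standard basis and
setting `e_j = 0` for `j ≥ n`. With `β(k, p) = k! p! / (k + p + 1)!`, the matrix
`Yad n a α β k` for `k ≥ 1` sends `e_n ↦ e_{k+1}`, `e_0 ↦ -β(k, 0) e_{k+2}` and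
`e_{p+1} ↦ β(k, p) e_{k+p+2}`, while `Y1` and `Y2` are weighted shifts
`e_{q+2} ↦ (1 - β(0, q+1)) e_{q+3}`, resp. `β(0, q+1) e_{q+3}`, plus a part supported on the
columns `0, 1, n`. Column by column, the relations
`⁅Y1, Yad k⁆ = Yad (k+1)` and `⁅Y2, Yad k⁆ = 0` become the two Beta-function identities
`β(k+1, p) + β(k, p+1) = β(k, p)` and `β(k, p) β(0, k+p+1) = β(0, p) β(k, p+1)`.
Once `Y2` commutes with every `ad(Y1)^j Y2`, the Jacobi identity propagates this by induction to
all pairs `ad(Y1)^i Y2`, `ad(Y1)^j Y2`.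
-/

lemma lie_eq_zero_of_lie_zero_eq_zero {L : Type*} [LieRing L] (x : L) (f : ℕ → L)
    (hf : ∀ k, f (k + 1) = ⁅x, f k⁆) (h₀ : ∀ j, ⁅f 0, f j⁆ = 0) (i j : ℕ) :
    ⁅f i, f j⁆ = 0 := by
  induction i generalizing j with
  | zero => exact h₀ j
  | succ i ih => rw [hf, lie_lie, ih, lie_zero, ← hf, ih, sub_zero]

/-- The Beta value `B(k + 1, p + 1)`. -/
def betaNat (k p : ℕ) : ℂ := (k.factorial * p.factorial : ℂ) / (k + p + 1).factorial

lemma betaNat_comm (k p : ℕ) : betaNat k p = betaNat p k := by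
  rw [betaNat, betaNat, mul_comm, add_comm k p]

lemma betaNat_zero_left (p : ℕ) : betaNat 0 p = 1 / (p + 1) := by
  have : (p.factorial : ℂ) ≠ 0 := mod_cast p.factorial_ne_zero
  rw [betaNat, zero_add, Nat.factorial_succ, Nat.factorial_zero]
  push_cast
  field_simp

lemma betaNat_zero_zero : betaNat 0 0 = 1 := by
  simp [betaNat]

lemma betaNat_succ_right (k p : ℕ) :
    betaNat k (p + 1) = betaNat k p * (p + 1) / (k + p + 2) := by
  have : ((k + p + 1).factorial : ℂ) ≠ 0 := mod_cast (k + p + 1).factorial_ne_zero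
  have : (k : ℂ) + p + 1 + 1 ≠ 0 := mod_cast (k + p + 1).succ_ne_zero
  have : (k : ℂ) + p + 2 ≠ 0 := mod_cast (k + p + 1).succ_ne_zero
  rw [betaNat, betaNat, ← add_assoc, Nat.factorial_succ (k + p + 1), Nat.factorial_succ p]
  push_cast
  field_simp
  ring

lemma betaNat_succ_left (k p : ℕ) :
    betaNat (k + 1) p = betaNat k p * (k + 1) / (k + p + 2) := by
  rw [betaNat_comm, betaNat_succ_right, betaNat_comm, add_comm (p : ℂ)]

lemma betaNat_succ_left_add_succ_right (k p : ℕ) :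
    betaNat (k + 1) p + betaNat k (p + 1) = betaNat k p := by
  have : (k : ℂ) + p + 2 ≠ 0 := mod_cast (k + p + 1).succ_ne_zero
  rw [betaNat_succ_left, betaNat_succ_right]
  field_simp
  ring

lemma betaNat_mul_betaNat_zero_left (k p : ℕ) :
    betaNat k p * betaNat 0 (k + p + 1) = betaNat 0 p * betaNat k (p + 1) := by
  have : (k : ℂ) + p + 2 ≠ 0 := mod_cast (k + p + 1).succ_ne_zero
  have : (k : ℂ) + p + 1 + 1 ≠ 0 := mod_cast (k + p + 1).succ_ne_zero
  have : (p : ℂ) + 1 ≠ 0 := mod_cast p.succ_ne_zero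
  rw [betaNat_zero_left, betaNat_zero_left, betaNat_succ_right]
  push_cast
  field_simp
  ring

section

variable {n : ℕ}

/-- Truncating at `j < n` rather than `j ≤ n` makes the column formulas below hold without
side conditions. -/
def lowBasis (n j : ℕ) : Fin (n + 1) → ℂ := fun i => if (i : ℕ) = j ∧ j < n then 1 else 0

lemma lowBasis_of_le {j : ℕ} (h : n ≤ j) : lowBasis n j = 0 := by
  funext i
  simp [lowBasis, not_lt.mpr h]

lemma lowBasis_natCast_apply {m : ℕ} (hm : m ≤ n) (j : ℕ) :
    lowBasis n j (m : Fin (n + 1)) = if m = j ∧ j < n then 1 else 0 := by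
  rw [lowBasis, Fin.val_cast_of_lt (by omega)]

lemma single_one_eq_lowBasis {i : Fin (n + 1)} (h : (i : ℕ) < n) :
    Pi.single i 1 = lowBasis n i := by
  funext i'
  simp [lowBasis, Pi.single_apply, Fin.ext_iff, h]

lemma ext_of_mulVec_lowBasis {M N : Matrix (Fin (n + 1)) (Fin (n + 1)) ℂ}
    (hlast : M *ᵥ Pi.single (Fin.last n) 1 = N *ᵥ Pi.single (Fin.last n) 1)
    (hlow : ∀ j, M *ᵥ lowBasis n j = N *ᵥ lowBasis n j) : M = N := by
  refine Matrix.ext_of_mulVec_single fun i => ?_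
  by_cases hi : (i : ℕ) < n
  · rw [single_one_eq_lowBasis hi, hlow]
  · rwa [show i = Fin.last n from Fin.ext (by simp; omega)]

lemma lie_mulVec (M N : Matrix (Fin (n + 1)) (Fin (n + 1)) ℂ) (v : Fin (n + 1) → ℂ) :
    ⁅M, N⁆ *ᵥ v = M *ᵥ (N *ᵥ v) - N *ᵥ (M *ᵥ v) := by
  rw [Ring.lie_def, Matrix.sub_mulVec, Matrix.mulVec_mulVec, Matrix.mulVec_mulVec]

lemma E_mulVec_of_lt {i : Fin (n + 1)} (hi : (i : ℕ) < n) (j : Fin (n + 1))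
    (v : Fin (n + 1) → ℂ) : E n i j *ᵥ v = v j • lowBasis n i := by
  rw [E, single_mulVec, one_mul, ← single_one_eq_lowBasis hi]
  funext i'
  simp [Pi.single_apply, Function.update_apply]

lemma smul_E_mulVec_of_mem_Icc {k : ℕ} (hk : k ∈ Finset.Icc 4 n) (c : ℂ)
    (v : Fin (n + 1) → ℂ) :
    (c • E n ↑(k - 1) ↑(k - 2)) *ᵥ v = (c * v ↑(k - 2)) • lowBasis n (k - 1) := by
  have hk := Finset.mem_Icc.mp hk
  have hrow : ((↑(k - 1) : Fin (n + 1)) : ℕ) = k - 1 := Fin.val_cast_of_lt (by omega)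
  rw [Matrix.smul_mulVec, E_mulVec_of_lt (by omega), hrow, mul_smul]

lemma sum_shift_mulVec_lowBasis (c : ℕ → ℂ) (j : ℕ) :
    (∑ k ∈ Finset.Icc 4 n, c k • E n ↑(k - 1) ↑(k - 2)) *ᵥ lowBasis n j =
      if 2 ≤ j then c (j + 2) • lowBasis n (j + 1) else 0 := by
  have hterm : ∀ k ∈ Finset.Icc 4 n, (c k • E n ↑(k - 1) ↑(k - 2)) *ᵥ lowBasis n j =
      if j + 2 = k then c k • lowBasis n (k - 1) else 0 := fun k hk => by
    rw [smul_E_mulVec_of_mem_Icc hk, lowBasis_natCast_apply (by grind)]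
    split_ifs <;> first | grind | simp
  rw [Matrix.sum_mulVec, Finset.sum_congr rfl hterm, Finset.sum_ite_eq,
    show j + 2 - 1 = j + 1 by omega]
  by_cases hjn : j + 2 ≤ n
  · simp only [Finset.mem_Icc, show 4 ≤ j + 2 ↔ 2 ≤ j by omega, hjn, and_true]
  · simp [lowBasis_of_le (show n ≤ j + 1 by omega), hjn]

lemma sum_shift_mulVec_single_last (c : ℕ → ℂ) :
    (∑ k ∈ Finset.Icc 4 n, c k • E n ↑(k - 1) ↑(k - 2)) *ᵥ Pi.single (Fin.last n) 1 =
      0 := by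
  rw [Matrix.sum_mulVec]
  refine Finset.sum_eq_zero fun k hk => ?_
  have hcol : (↑(k - 2) : Fin (n + 1)) ≠ Fin.last n := by
    rw [Ne, Fin.ext_iff, Fin.val_cast_of_lt (by grind), Fin.val_last]
    grind
  rw [smul_E_mulVec_of_mem_Icc hk, Pi.single_eq_of_ne hcol, mul_zero, zero_smul]

/-- The closed form of `Yad n a α β k` for `k ≥ 1`. -/
def bracketForm (n k : ℕ) : Matrix (Fin (n + 1)) (Fin (n + 1)) ℂ :=
  Matrix.of fun i j =>
    if j = Fin.last n then lowBasis n (k + 1) i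
    else if (j : ℕ) = 0 then -betaNat k 0 * lowBasis n (k + 2) i
    else betaNat k (j - 1) * lowBasis n (k + j + 1) i

lemma bracketForm_mulVec_last (k : ℕ) :
    bracketForm n k *ᵥ Pi.single (Fin.last n) 1 = lowBasis n (k + 1) := by
  funext i
  simp [bracketForm]

lemma bracketForm_mulVec_lowBasis_zero (hn : n ≠ 0) (k : ℕ) :
    bracketForm n k *ᵥ lowBasis n 0 = -betaNat k 0 • lowBasis n (k + 2) := by
  have h0 := single_one_eq_lowBasis (i := (0 : Fin (n + 1))) (by simp; omega)
  rw [Fin.val_zero] at h0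
  rw [← h0, Matrix.mulVec_single_one]
  funext i
  simp only [bracketForm, Matrix.col_apply, Matrix.of_apply, Fin.val_zero, if_true,
    if_neg (Fin.ext_iff.not.mpr (by simp; omega) : (0 : Fin (n + 1)) ≠ Fin.last n)]
  rfl

lemma bracketForm_mulVec_lowBasis_succ (k p : ℕ) :
    bracketForm n k *ᵥ lowBasis n (p + 1) = betaNat k p • lowBasis n (k + p + 2) := by
  by_cases hp : p + 1 < n
  · rw [← single_one_eq_lowBasis (i := ⟨p + 1, by omega⟩) hp, Matrix.mulVec_single_one]
    funext i
    simp only [bracketForm, Matrix.col_apply, Matrix.of_apply]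
    rw [if_neg (by simp [Fin.ext_iff]; omega), if_neg (by omega), Nat.add_sub_cancel,
      show k + (p + 1) + 1 = k + p + 2 by ring]
    rfl
  · rw [lowBasis_of_le (by omega), lowBasis_of_le (by omega), Matrix.mulVec_zero, smul_zero]

lemma bracketForm_mulVec_lowBasis_one (k : ℕ) :
    bracketForm n k *ᵥ lowBasis n 1 = betaNat k 0 • lowBasis n (k + 2) :=
  bracketForm_mulVec_lowBasis_succ k 0

lemma bracketForm_mulVec_lowBasis_zero_add_one (hn : n ≠ 0) (k : ℕ) :
    bracketForm n k *ᵥ (lowBasis n 0 + lowBasis n 1) = 0 := by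
  rw [Matrix.mulVec_add, bracketForm_mulVec_lowBasis_zero hn,
    bracketForm_mulVec_lowBasis_one, neg_smul, neg_add_cancel]

lemma bracketForm_mulVec_lowBasis_pred (hn : 2 ≤ n) (k : ℕ) :
    bracketForm n k *ᵥ lowBasis n (n - 1) = 0 := by
  rw [show n - 1 = n - 2 + 1 by omega, bracketForm_mulVec_lowBasis_succ,
    lowBasis_of_le (by omega), smul_zero]

section

variable (a α β : ℂ)

lemma Y1_mulVec (hn : 2 ≤ n) (v : Fin (n + 1) → ℂ) :
    Y1 n a α β *ᵥ v = (a * (v 0 + v 1)) • (lowBasis n 0 + lowBasis n 1)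
      + v (Fin.last n) • lowBasis n 0
      + (∑ k ∈ Finset.Icc 4 n, (((k : ℂ) - 3) / ((k : ℂ) - 2)) • E n ↑(k - 1) ↑(k - 2))
        *ᵥ v
      + (α * v 0 + β * v 1) • lowBasis n (n - 1) := by
  have h1 : ((1 : Fin (n + 1)) : ℕ) = 1 := by rw [Fin.val_one', Nat.mod_eq_of_lt (by omega)]
  have hpred : ((↑(n - 1) : Fin (n + 1)) : ℕ) = n - 1 := Fin.val_cast_of_lt (by omega)
  simp only [Y1, Matrix.add_mulVec, Matrix.smul_mulVec,
    E_mulVec_of_lt (show ((0 : Fin (n + 1)) : ℕ) < n by simp; omega),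
    E_mulVec_of_lt (show ((1 : Fin (n + 1)) : ℕ) < n by omega),
    E_mulVec_of_lt (show ((↑(n - 1) : Fin (n + 1)) : ℕ) < n by omega), h1, hpred, Fin.val_zero]
  module

lemma Y1_mulVec_last (hn : 2 ≤ n) :
    Y1 n a α β *ᵥ Pi.single (Fin.last n) 1 = lowBasis n 0 := by
  rw [Y1_mulVec a α β hn, sum_shift_mulVec_single_last]
  simp [Fin.ext_iff, Nat.mod_eq_of_lt (show 1 < n + 1 by omega), show n ≠ 0 by omega,
    show 1 ≠ n by omega]

lemma Y1_mulVec_lowBasis_zero (hn : 2 ≤ n) :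
    Y1 n a α β *ᵥ lowBasis n 0 =
      a • (lowBasis n 0 + lowBasis n 1) + α • lowBasis n (n - 1) := by
  rw [Y1_mulVec a α β hn, sum_shift_mulVec_lowBasis]
  simp [lowBasis, Nat.mod_eq_of_lt (show 1 < n + 1 by omega), show 0 < n by omega,
    show n ≠ 0 by omega]

lemma Y1_mulVec_lowBasis_one (hn : 2 ≤ n) :
    Y1 n a α β *ᵥ lowBasis n 1 =
      a • (lowBasis n 0 + lowBasis n 1) + β • lowBasis n (n - 1) := by
  rw [Y1_mulVec a α β hn, sum_shift_mulVec_lowBasis]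
  simp [lowBasis, Nat.mod_eq_of_lt (show 1 < n + 1 by omega), show 1 < n by omega,
    show n ≠ 1 by omega]

lemma Y1_mulVec_lowBasis_add_two (hn : 2 ≤ n) (q : ℕ) :
    Y1 n a α β *ᵥ lowBasis n (q + 2) = (1 - betaNat 0 (q + 1)) • lowBasis n (q + 3) := by
  have hc : (((q + 2 + 2 : ℕ) : ℂ) - 3) / ((q + 2 + 2 : ℕ) - 2) = 1 - betaNat 0 (q + 1) := by
    have : (q : ℂ) + 1 + 1 ≠ 0 := mod_cast (q + 1).succ_ne_zero
    rw [betaNat_zero_left]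
    push_cast
    rw [show (q : ℂ) + 2 + 2 - 2 = q + 1 + 1 by ring]
    field_simp
    ring
  rw [Y1_mulVec a α β hn, sum_shift_mulVec_lowBasis, if_pos (by omega), hc]
  simp [lowBasis, Nat.mod_eq_of_lt (show 1 < n + 1 by omega),
    show ¬(n = q + 2 ∧ q + 2 < n) by omega]

lemma Y1_mulVec_lowBasis_pred (hn : 3 ≤ n) : Y1 n a α β *ᵥ lowBasis n (n - 1) = 0 := by
  rw [show n - 1 = n - 3 + 2 by omega, Y1_mulVec_lowBasis_add_two a α β (by omega),
    lowBasis_of_le (by omega), smul_zero]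

lemma Y2_mulVec (hn : 3 ≤ n) (v : Fin (n + 1) → ℂ) :
    Y2 n a α β *ᵥ v = (a * (v 0 + v 1)) • (lowBasis n 0 + lowBasis n 1)
      + v (Fin.last n) • lowBasis n 1 + (v 1 - v 0) • lowBasis n 2
      + (∑ k ∈ Finset.Icc 4 n, (1 / ((k : ℂ) - 2)) • E n ↑(k - 1) ↑(k - 2)) *ᵥ v
      + (β * v 0 + α * v 1) • lowBasis n (n - 1) := by
  have h1 : ((1 : Fin (n + 1)) : ℕ) = 1 := by rw [Fin.val_one', Nat.mod_eq_of_lt (by omega)]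
  have h2 : ((2 : Fin (n + 1)) : ℕ) = 2 := by simp [Nat.mod_eq_of_lt (show 2 < n + 1 by omega)]
  have hpred : ((↑(n - 1) : Fin (n + 1)) : ℕ) = n - 1 := Fin.val_cast_of_lt (by omega)
  simp only [Y2, Matrix.add_mulVec, Matrix.sub_mulVec, Matrix.smul_mulVec,
    E_mulVec_of_lt (show ((0 : Fin (n + 1)) : ℕ) < n by simp; omega),
    E_mulVec_of_lt (show ((1 : Fin (n + 1)) : ℕ) < n by omega),
    E_mulVec_of_lt (show ((2 : Fin (n + 1)) : ℕ) < n by omega),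
    E_mulVec_of_lt (show ((↑(n - 1) : Fin (n + 1)) : ℕ) < n by omega), h1, h2, hpred,
    Fin.val_zero]
  module

lemma Y2_mulVec_last (hn : 3 ≤ n) :
    Y2 n a α β *ᵥ Pi.single (Fin.last n) 1 = lowBasis n 1 := by
  rw [Y2_mulVec a α β hn, sum_shift_mulVec_single_last]
  simp [Fin.ext_iff, Nat.mod_eq_of_lt (show 1 < n + 1 by omega), show n ≠ 0 by omega,
    show 1 ≠ n by omega]

lemma Y2_mulVec_lowBasis_zero (hn : 3 ≤ n) :
    Y2 n a α β *ᵥ lowBasis n 0 =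
      a • (lowBasis n 0 + lowBasis n 1) - lowBasis n 2 + β • lowBasis n (n - 1) := by
  rw [Y2_mulVec a α β hn, sum_shift_mulVec_lowBasis]
  simp [lowBasis, Nat.mod_eq_of_lt (show 1 < n + 1 by omega), show 0 < n by omega,
    show n ≠ 0 by omega, ← sub_eq_add_neg]

lemma Y2_mulVec_lowBasis_one (hn : 3 ≤ n) :
    Y2 n a α β *ᵥ lowBasis n 1 =
      a • (lowBasis n 0 + lowBasis n 1) + lowBasis n 2 + α • lowBasis n (n - 1) := by
  rw [Y2_mulVec a α β hn, sum_shift_mulVec_lowBasis]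
  simp [lowBasis, Nat.mod_eq_of_lt (show 1 < n + 1 by omega), show 1 < n by omega,
    show n ≠ 1 by omega]

lemma Y2_mulVec_lowBasis_add_two (hn : 3 ≤ n) (q : ℕ) :
    Y2 n a α β *ᵥ lowBasis n (q + 2) = betaNat 0 (q + 1) • lowBasis n (q + 3) := by
  have hc : 1 / (((q + 2 + 2 : ℕ) : ℂ) - 2) = betaNat 0 (q + 1) := by
    rw [betaNat_zero_left]
    push_cast
    ring_nf
  rw [Y2_mulVec a α β hn, sum_shift_mulVec_lowBasis, if_pos (by omega), hc]
  simp [lowBasis, Nat.mod_eq_of_lt (show 1 < n + 1 by omega),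
    show ¬(n = q + 2 ∧ q + 2 < n) by omega]

lemma Y2_mulVec_lowBasis_pred (hn : 3 ≤ n) : Y2 n a α β *ᵥ lowBasis n (n - 1) = 0 := by
  rw [show n - 1 = n - 3 + 2 by omega, Y2_mulVec_lowBasis_add_two a α β hn,
    lowBasis_of_le (by omega), smul_zero]

lemma lie_Y1_bracketForm (hn : 2 ≤ n) (k : ℕ) :
    ⁅Y1 n a α β, bracketForm n (k + 1)⁆ = bracketForm n (k + 2) := by
  have hn0 : n ≠ 0 := by omega
  refine ext_of_mulVec_lowBasis ?_ fun j => ?_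
  · rw [lie_mulVec, bracketForm_mulVec_last, bracketForm_mulVec_last, Y1_mulVec_last a α β hn,
      Y1_mulVec_lowBasis_add_two a α β hn k, bracketForm_mulVec_lowBasis_zero hn0]
    linear_combination (norm := module) (betaNat_comm (k + 1) 0) • lowBasis n (k + 3)
  have hQ₀ := betaNat_mul_betaNat_zero_left (k + 1) 0
  have hP₀ := betaNat_succ_left_add_succ_right (k + 1) 0
  rw [betaNat_zero_zero, one_mul] at hQ₀
  match j with
  | 0 =>
    simp only [lie_mulVec, bracketForm_mulVec_lowBasis_zero hn0,
      Y1_mulVec_lowBasis_zero a α β hn, Matrix.mulVec_add, Matrix.mulVec_smul,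
      bracketForm_mulVec_lowBasis_zero_add_one hn0, bracketForm_mulVec_lowBasis_pred hn,
      Y1_mulVec_lowBasis_add_two a α β hn]
    linear_combination (norm := module) (hP₀ + hQ₀) • lowBasis n (k + 4)
  | 1 =>
    simp only [lie_mulVec, bracketForm_mulVec_lowBasis_one,
      Y1_mulVec_lowBasis_one a α β hn, Matrix.mulVec_add, Matrix.mulVec_smul,
      bracketForm_mulVec_lowBasis_zero_add_one hn0, bracketForm_mulVec_lowBasis_pred hn,
      Y1_mulVec_lowBasis_add_two a α β hn]
    linear_combination (norm := module) (-hP₀ - hQ₀) • lowBasis n (k + 4)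
  | q + 2 =>
    simp only [lie_mulVec, bracketForm_mulVec_lowBasis_succ, Matrix.mulVec_smul,
      Y1_mulVec_lowBasis_add_two a α β hn]
    have hQ := betaNat_mul_betaNat_zero_left (k + 1) (q + 1)
    have hP := betaNat_succ_left_add_succ_right (k + 1) (q + 1)
    -- `ring_nf` identifies indices such as `k + 1 + (q + 1) + 3` and `k + 2 + (q + 1) + 2`
    ring_nf at hQ hP ⊢
    match_scalars
    linear_combination -hP - hQ

lemma lie_Y2_bracketForm (hn : 3 ≤ n) (k : ℕ) :
    ⁅Y2 n a α β, bracketForm n (k + 1)⁆ = 0 := by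
  have hn0 : n ≠ 0 := by omega
  refine ext_of_mulVec_lowBasis ?_ fun j => ?_
  · rw [lie_mulVec, bracketForm_mulVec_last, Y2_mulVec_last a α β hn,
      Y2_mulVec_lowBasis_add_two a α β hn k, bracketForm_mulVec_lowBasis_one, Matrix.zero_mulVec]
    linear_combination (norm := module) (betaNat_comm 0 (k + 1)) • lowBasis n (k + 3)
  have hQ₀ := betaNat_mul_betaNat_zero_left (k + 1) 0
  rw [betaNat_zero_zero, one_mul] at hQ₀
  match j with
  | 0 =>
    simp only [lie_mulVec, bracketForm_mulVec_lowBasis_zero hn0,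
      Y2_mulVec_lowBasis_zero a α β hn, Matrix.mulVec_add, Matrix.mulVec_sub, Matrix.mulVec_smul,
      bracketForm_mulVec_lowBasis_zero_add_one hn0,
      bracketForm_mulVec_lowBasis_pred (by omega : 2 ≤ n), Y2_mulVec_lowBasis_add_two a α β hn,
      bracketForm_mulVec_lowBasis_succ (n := n) (k + 1) 1, Matrix.zero_mulVec]
    linear_combination (norm := module) (-hQ₀) • lowBasis n (k + 4)
  | 1 =>
    simp only [lie_mulVec, bracketForm_mulVec_lowBasis_one,
      Y2_mulVec_lowBasis_one a α β hn, Matrix.mulVec_add, Matrix.mulVec_smul,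
      bracketForm_mulVec_lowBasis_zero_add_one hn0,
      bracketForm_mulVec_lowBasis_pred (by omega : 2 ≤ n), Y2_mulVec_lowBasis_add_two a α β hn,
      bracketForm_mulVec_lowBasis_succ (n := n) (k + 1) 1, Matrix.zero_mulVec]
    linear_combination (norm := module) hQ₀ • lowBasis n (k + 4)
  | q + 2 =>
    simp only [lie_mulVec, bracketForm_mulVec_lowBasis_succ, Matrix.mulVec_smul,
      Y2_mulVec_lowBasis_add_two a α β hn, Matrix.zero_mulVec]
    have hQ := betaNat_mul_betaNat_zero_left (k + 1) (q + 1)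
    ring_nf at hQ ⊢
    match_scalars
    linear_combination hQ

lemma lie_Y1_Y2 (hn : 3 ≤ n) : ⁅Y1 n a α β, Y2 n a α β⁆ = bracketForm n 1 := by
  have hn2 : 2 ≤ n := by omega
  refine ext_of_mulVec_lowBasis ?_ fun j => ?_
  · rw [lie_mulVec, bracketForm_mulVec_last, Y2_mulVec_last a α β hn, Y1_mulVec_last a α β hn2,
      Y1_mulVec_lowBasis_one a α β hn2, Y2_mulVec_lowBasis_zero a α β hn]
    module
  have hP₀ := betaNat_succ_left_add_succ_right 0 0
  rw [betaNat_zero_zero] at hP₀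
  match j with
  | 0 =>
    simp only [lie_mulVec, bracketForm_mulVec_lowBasis_zero (show n ≠ 0 by omega),
      Y1_mulVec_lowBasis_zero a α β hn2, Y2_mulVec_lowBasis_zero a α β hn,
      Y1_mulVec_lowBasis_one a α β hn2, Y2_mulVec_lowBasis_one a α β hn,
      Matrix.mulVec_add, Matrix.mulVec_sub, Matrix.mulVec_smul,
      Y1_mulVec_lowBasis_pred a α β hn, Y2_mulVec_lowBasis_pred a α β hn,
      Y1_mulVec_lowBasis_add_two a α β hn2 0]
    linear_combination (norm := module) hP₀ • lowBasis n 3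
  | 1 =>
    simp only [lie_mulVec, bracketForm_mulVec_lowBasis_one,
      Y1_mulVec_lowBasis_zero a α β hn2, Y2_mulVec_lowBasis_zero a α β hn,
      Y1_mulVec_lowBasis_one a α β hn2, Y2_mulVec_lowBasis_one a α β hn,
      Matrix.mulVec_add, Matrix.mulVec_smul,
      Y1_mulVec_lowBasis_pred a α β hn, Y2_mulVec_lowBasis_pred a α β hn,
      Y1_mulVec_lowBasis_add_two a α β hn2 0]
    linear_combination (norm := module) (-hP₀) • lowBasis n 3
  | q + 2 =>
    simp only [lie_mulVec, bracketForm_mulVec_lowBasis_succ, Matrix.mulVec_smul,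
      Y1_mulVec_lowBasis_add_two a α β hn2, Y2_mulVec_lowBasis_add_two a α β hn]
    have hP := betaNat_succ_left_add_succ_right 0 (q + 1)
    ring_nf at hP ⊢
    match_scalars
    linear_combination -hP

lemma Yad_succ_eq_bracketForm (hn : 3 ≤ n) (k : ℕ) :
    Yad n a α β (k + 1) = bracketForm n (k + 1) := by
  induction k with
  | zero => exact lie_Y1_Y2 a α β hn
  | succ k ih => exact (congrArg _ ih).trans (lie_Y1_bracketForm a α β (by omega) k)

lemma lie_Yad_zero (hn : 3 ≤ n) : ∀ j, ⁅Yad n a α β 0, Yad n a α β j⁆ = 0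
  | 0 => by rw [Ring.lie_def, sub_self]
  | k + 1 => by rw [Yad_succ_eq_bracketForm a α β hn]; exact lie_Y2_bracketForm a α β hn k

end

end

theorem iterated_brackets_commute_general (n : ℕ) (hn : 4 ≤ n) (a α β : ℂ) :
    ∀ i j : ℕ, ⁅Yad n a α β i, Yad n a α β j⁆ = 0 :=
  @lie_eq_zero_of_lie_zero_eq_zero _ LieRing.ofAssociativeRing (Y1 n a α β) (Yad n a α β)
    (fun _ => rfl) (lie_Yad_zero a α β (by omega))

/-- All the iterated brackets ad(Y1)^k(Y2), k ≥ 0, commute pairwise. -/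
theorem iterated_brackets_commute (n : ℕ) (hn : 4 ≤ n) (a α β : ℂ) (ha : a ≠ 0) :
    ∀ i j : ℕ, ⁅Yad n a α β i, Yad n a α β j⁆ = 0 :=
  iterated_brackets_commute_general n hn a α β
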